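/- arXiv:1108.5492 — 3 statements merged into one kernel-verified Lean document; each statement's English description precedes it below -/
import Mathlib

section
/- For β = 1/2, the function p(z) = ∑_{k=0}^∞ z^k/Γ(1/2+k) satisfies p(z) = z^{1/2} e^z erf(√z) + 1/√π for all real z > 0, where erf(x) = (2/√π) ∫₀^x e^{-t²} dt. -/
/-!
Split off the constant term `1/Γ(1/2) = 1/√π`. For the others,
`Γ(k + 3/2) ∫₀¹ (1 - u²)^k du = (√π/2) k!` (both sides satisfy the same first-order recursion
in `k`), so the tail of the series is
`(2/√π) z ∑ₖ zᵏ/k! ∫₀¹ (1 - u²)^k du = (2/√π) z ∫₀¹ e^{z(1 - u²)} du`.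
The substitution `t = √z u` turns `√z e^z ∫₀^√z e^{-t²} dt` into the same integral.
-/

open MeasureTheory Real
open scoped Nat Interval

theorem hasSum_intervalIntegral_pow_div_factorial {f : ℝ → ℝ} {a b M : ℝ}
    (hf : AEStronglyMeasurable f (volume.restrict (Ι a b))) (hM : ∀ u ∈ Ι a b, |f u| ≤ M) :
    HasSum (fun n : ℕ => ∫ u in a..b, f u ^ n / n !) (∫ u in a..b, exp (f u)) := by
  refine intervalIntegral.hasSum_integral_of_dominated_convergence (fun n _ => M ^ n / n !)
    (fun n => by fun_prop) (fun n => ae_of_all _ fun u hu => ?_)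
    (ae_of_all _ fun _ _ => summable_pow_div_factorial M) intervalIntegrable_const
    (ae_of_all _ fun u _ => ?_)
  · rw [norm_div, norm_pow, norm_eq_abs, Real.norm_natCast]
    gcongr
    exact hM u hu
  · rw [exp_eq_exp_ℝ]
    exact NormedSpace.expSeries_div_hasSum_exp (f u)

theorem integral_one_sub_sq_pow_succ (k : ℕ) :
    (2 * k + 3 : ℝ) * ∫ u in (0:ℝ)..1, (1 - u ^ 2) ^ (k + 1) =
      (2 * k + 2) * ∫ u in (0:ℝ)..1, (1 - u ^ 2) ^ k := by
  have hderiv (u : ℝ) : HasDerivAt (fun u => u * (1 - u ^ 2) ^ (k + 1))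
      ((2 * k + 3) * (1 - u ^ 2) ^ (k + 1) - (2 * k + 2) * (1 - u ^ 2) ^ k) u := by
    refine ((hasDerivAt_id' u).fun_mul
      (((hasDerivAt_pow 2 u).const_sub 1).fun_pow (k + 1))).congr_deriv ?_
    simp only [Nat.add_sub_cancel, pow_succ]
    push_cast
    ring
  have hftc := intervalIntegral.integral_eq_sub_of_hasDerivAt (a := 0) (b := 1)
    (fun u _ => hderiv u)
    (by apply Continuous.intervalIntegrable; fun_prop)
  rw [intervalIntegral.integral_sub (by apply Continuous.intervalIntegrable; fun_prop)
    (by apply Continuous.intervalIntegrable; fun_prop), intervalIntegral.integral_const_mul,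
    intervalIntegral.integral_const_mul] at hftc
  norm_num at hftc
  linarith

theorem Gamma_add_three_halves_mul_integral_one_sub_sq_pow (k : ℕ) :
    Gamma (k + 3 / 2) * ∫ u in (0:ℝ)..1, (1 - u ^ 2) ^ k = √π / 2 * k ! := by
  induction k with
  | zero =>
    rw [show ((0 : ℕ) : ℝ) + 3 / 2 = 1 / 2 + 1 by norm_num, Gamma_add_one (by norm_num),
      Gamma_one_half_eq]
    norm_num
    ring
  | succ k ih =>
    have hk : (k : ℝ) + 3 / 2 ≠ 0 := by positivity
    rw [show ((k + 1 : ℕ) : ℝ) + 3 / 2 = (k + 3 / 2) + 1 by push_cast; ring, Gamma_add_one hk,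
      Nat.factorial_succ]
    push_cast
    linear_combination (Gamma (k + 3 / 2) / 2) * integral_one_sub_sq_pow_succ k + (k + 1) * ih

theorem pow_succ_div_Gamma_half_add_succ (z : ℝ) (k : ℕ) :
    z ^ (k + 1) / Gamma (1 / 2 + (k + 1 : ℕ)) =
      2 / √π * (z * ∫ u in (0:ℝ)..1, (z * (1 - u ^ 2)) ^ k / k !) := by
  have hΓ : Gamma (k + 3 / 2) ≠ 0 := (Gamma_pos_of_pos (by positivity)).ne'
  simp_rw [mul_pow, mul_div_right_comm _ _ (k ! : ℝ)]
  rw [intervalIntegral.integral_const_mul,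
    show (1 : ℝ) / 2 + (k + 1 : ℕ) = k + 3 / 2 by push_cast; ring,
    eq_div_of_mul_eq hΓ
      ((mul_comm _ _).trans (Gamma_add_three_halves_mul_integral_one_sub_sq_pow k))]
  field_simp
  ring

theorem sqrt_mul_exp_mul_integral_exp_neg_sq {z : ℝ} (hz : 0 ≤ z) :
    √z * exp z * ∫ t in (0:ℝ)..√z, exp (-t ^ 2) =
      z * ∫ u in (0:ℝ)..1, exp (z * (1 - u ^ 2)) := by
  have hsub := intervalIntegral.smul_integral_comp_mul_left (fun t => exp (-t ^ 2)) √z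
    (a := 0) (b := 1)
  simp only [mul_zero, mul_one, smul_eq_mul, mul_pow, sq_sqrt hz] at hsub
  simp only [← hsub, ← intervalIntegral.integral_const_mul]
  congr 1 with u
  rw [show z * (1 - u ^ 2) = z + -(z * u ^ 2) by ring, exp_add]
  linear_combination (exp z * exp (-(z * u ^ 2))) * mul_self_sqrt hz

theorem p_series_beta_half (z : ℝ) (hz : 0 < z) :
    (∑' k : ℕ, z ^ k / Real.Gamma (1/2 + k)) =
      z ^ ((1:ℝ)/2) * Real.exp z *
        ((2 / Real.sqrt Real.pi) * ∫ t in (0:ℝ)..Real.sqrt z, Real.exp (-t ^ 2)) +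
      1 / Real.sqrt Real.pi := by
  have hbound : ∀ u ∈ Ι (0:ℝ) 1, |z * (1 - u ^ 2)| ≤ z := by
    intro u hu
    rw [Set.uIoc_of_le zero_le_one] at hu
    have hu2 : u ^ 2 ≤ 1 := by nlinarith [hu.1, hu.2]
    rw [abs_of_nonneg (mul_nonneg hz.le (by linarith))]
    nlinarith [sq_nonneg u]
  have htail : HasSum (fun k : ℕ => z ^ (k + 1) / Gamma (1 / 2 + (k + 1 : ℕ)))
      (2 / √π * (z * ∫ u in (0:ℝ)..1, exp (z * (1 - u ^ 2)))) := by
    simp_rw [pow_succ_div_Gamma_half_add_succ]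
    exact ((hasSum_intervalIntegral_pow_div_factorial (by fun_prop) hbound).mul_left z).mul_left _
  rw [(HasSum.zero_add (f := fun k : ℕ => z ^ k / Gamma (1 / 2 + k)) htail).tsum_eq]
  rw [← sqrt_eq_rpow, ← sqrt_mul_exp_mul_integral_exp_neg_sq hz.le]
  norm_num [Gamma_one_half_eq]
  ring
end

section
/- Suppose α₁,…,α_{2N} are distinct nonzero complex numbers and ω₁,…,ω_{2N} complex numbers satisfying the canonical equations Γ(β+k) ∑_{j=1}^{2N} ω_j α_j^{-(β+k)} = -1 for k = 0,1,…,4N-1, where β > 0. Then for every g of the form g(s) = s^{-β} ∑_{k=0}^{4N-1} b_k s^{-k} and every v > 0, the inverse Laplace transform G(v) = v^{β-1} ∑_{k=0}^{4N-1} (b_k/Γ(β+k)) v^k satisfies G(v) = -(1/v) ∑_{j=1}^{2N} ω_j g(α_j/v). -/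
/-
For `v > 0` the principal branch satisfies `(z / v) ^ s = z ^ s / v ^ s`, since dividing by a
positive real does not change the argument. Hence `∑ⱼ ωⱼ g(αⱼ / v)` equals
`∑ₖ bₖ v ^ (β + k) ∑ⱼ ωⱼ αⱼ ^ (-(β + k))`, and the canonical equations say that the inner moment is
`-1 / Γ(β + k)`; multiplying by `-1 / v` gives the inverse Laplace transform term by term.
-/

open Finset

namespace Complex

lemma div_ofReal_cpow {v : ℝ} (hv : 0 < v) (z s : ℂ) : (z / v) ^ s = z ^ s / (v : ℂ) ^ s := by
  have hv' : (v : ℂ) ≠ 0 := ofReal_ne_zero.2 hv.ne'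
  rcases eq_or_ne z 0 with rfl | hz
  · rcases eq_or_ne s 0 with rfl | hs
    · simp
    · simp [zero_cpow hs]
  rw [div_eq_mul_inv, ← ofReal_inv,
    cpow_def_of_ne_zero (mul_ne_zero hz (ofReal_ne_zero.2 (inv_ne_zero hv.ne'))),
    log_mul_ofReal _ (inv_pos.2 hv) _ hz, cpow_def_of_ne_zero hz, cpow_def_of_ne_zero hv',
    Real.log_inv, ofReal_neg, ofReal_log hv.le, div_eq_mul_inv, ← exp_neg, ← exp_add]
  ring_nf

lemma cpow_neg_mul_sum_cpow_neg_div_ofReal {v : ℝ} (hv : 0 < v) {z : ℂ} (hz : z ≠ 0) (β : ℂ)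
    (b : ℕ → ℂ) (n : ℕ) :
    (z / v) ^ (-β) * ∑ k ∈ range n, b k * (z / v) ^ (-(k : ℂ)) =
      ∑ k ∈ range n, b k * (v : ℂ) ^ (β + k) * z ^ (-(β + k)) := by
  have hzv : z / v ≠ 0 := div_ne_zero hz (ofReal_ne_zero.2 hv.ne')
  rw [mul_sum]
  refine sum_congr rfl fun k _ => ?_
  rw [mul_left_comm, ← cpow_add _ _ hzv, ← neg_add, div_ofReal_cpow hv, cpow_neg (v : ℂ),
    div_inv_eq_mul]
  ring

lemma sum_mul_cpow_neg_mul_sum_cpow_neg_div_ofReal {ι : Type*} [Fintype ι] {v : ℝ} (hv : 0 < v)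
    {α : ι → ℂ} (hα : ∀ j, α j ≠ 0) (ω : ι → ℂ) (β : ℂ) (b : ℕ → ℂ) (n : ℕ) :
    ∑ j, ω j * ((α j / v) ^ (-β) * ∑ k ∈ range n, b k * (α j / v) ^ (-(k : ℂ))) =
      ∑ k ∈ range n, b k * (v : ℂ) ^ (β + k) * ∑ j, ω j * α j ^ (-(β + k)) := by
  simp_rw [cpow_neg_mul_sum_cpow_neg_div_ofReal hv (hα _), mul_sum]
  rw [sum_comm]
  refine sum_congr rfl fun k _ => sum_congr rfl fun j _ => ?_
  ring

end Complex

theorem inverse_laplace_exact_from_canonical_general (β : ℝ) (N : ℕ)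
    (α ω : Fin (2 * N) → ℂ)
    (hne : ∀ j, α j ≠ 0)
    (hcanon : ∀ k : ℕ, k < 4 * N →
      (Real.Gamma (β + k) : ℂ) * ∑ j, ω j * (α j) ^ (-((β : ℂ) + k)) = -1)
    (b : ℕ → ℝ) (v : ℝ) (hv : 0 < v) :
    ((v ^ (β - 1) * ∑ k ∈ Finset.range (4 * N), b k / Real.Gamma (β + k) * v ^ k : ℝ) : ℂ) =
      -(1 / (v : ℂ)) * ∑ j, ω j *
        (((α j) / v) ^ (-(β : ℂ)) *
          ∑ k ∈ Finset.range (4 * N), (b k : ℂ) * ((α j) / v) ^ (-(k : ℂ))) := by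
  have hmoment : ∀ k ∈ range (4 * N),
      ∑ j, ω j * α j ^ (-((β : ℂ) + k)) = -(Real.Gamma (β + k) : ℂ)⁻¹ := fun k hk =>
    neg_eq_iff_eq_neg.1 <| eq_inv_of_mul_eq_one_right <| by
      rw [mul_neg, hcanon k (mem_range.1 hk), neg_neg]
  have hv' : (v : ℂ) ≠ 0 := Complex.ofReal_ne_zero.2 hv.ne'
  have hpow : ((v ^ (β - 1) : ℝ) : ℂ) = (v : ℂ) ^ (β : ℂ) * (v : ℂ)⁻¹ := by
    rw [Complex.ofReal_cpow hv.le, Complex.ofReal_sub, Complex.ofReal_one,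
      Complex.cpow_sub _ _ hv', Complex.cpow_one, div_eq_mul_inv]
  rw [Complex.sum_mul_cpow_neg_mul_sum_cpow_neg_div_ofReal hv hne]
  push_cast
  rw [hpow, mul_sum, mul_sum]
  refine sum_congr rfl fun k hk => ?_
  rw [hmoment k hk, Complex.cpow_add _ _ hv', Complex.cpow_natCast]
  ring

theorem inverse_laplace_exact_from_canonical (β : ℝ) (hβ : 0 < β) (N : ℕ) (hN : 1 ≤ N)
    (α ω : Fin (2 * N) → ℂ)
    (hdist : Function.Injective α) (hne : ∀ j, α j ≠ 0)
    (hcanon : ∀ k : ℕ, k < 4 * N →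
      (Real.Gamma (β + k) : ℂ) * ∑ j, ω j * (α j) ^ (-((β : ℂ) + k)) = -1)
    (b : ℕ → ℝ) (v : ℝ) (hv : 0 < v) :
    ((v ^ (β - 1) * ∑ k ∈ Finset.range (4 * N), b k / Real.Gamma (β + k) * v ^ k : ℝ) : ℂ) =
      -(1 / (v : ℂ)) * ∑ j, ω j *
        (((α j) / v) ^ (-(β : ℂ)) *
          ∑ k ∈ Finset.range (4 * N), (b k : ℂ) * ((α j) / v) ^ (-(k : ℂ))) :=
  inverse_laplace_exact_from_canonical_general β N α ω hne hcanon b v hv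
end

section
/- Sifting-property limit: if f : [0,∞) → ℝ is continuous and bounded, then for every b > 0, lim_{β→0⁺} ∫₀^b f(v) · v^(β-1)/Γ(β) dv = f(0). -/
/-!
The kernels `v ^ (β - 1) / Γ(β)` are nonnegative, have mass `c ^ β / Γ(β + 1) → 1` on every
`(0, c)`, and tend to `0` uniformly on every `[δ, ∞)` because `1 / Γ(β) = β / Γ(β + 1) → 0`.
They are therefore peak functions concentrating at `0`, and Mathlib's approximation-of-identity
theorem applies to `f`, which is integrable on `(0, b)` and continuous at `0` from the right.
-/

open MeasureTheory Real Filter Set Topology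

noncomputable def riemannLiouvilleKernel (β v : ℝ) : ℝ := v ^ (β - 1) / Gamma β

lemma tendsto_Gamma_add_one_nhds_zero : Tendsto (fun β : ℝ ↦ Gamma (β + 1)) (𝓝 0) (𝓝 1) := by
  have hcont : ContinuousAt Gamma 1 :=
    (differentiableAt_Gamma fun m ↦ by linarith [(m.cast_nonneg : (0 : ℝ) ≤ m)]).continuousAt
  simpa [Function.comp_def, Gamma_one] using
    hcont.tendsto.comp ((continuous_add_const (1 : ℝ)).tendsto' 0 1 (zero_add 1))

lemma tendsto_inv_Gamma_nhdsGT_zero : Tendsto (fun β : ℝ ↦ (Gamma β)⁻¹) (𝓝[>] 0) (𝓝 0) := by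
  have h : Tendsto (fun β : ℝ ↦ β / Gamma (β + 1)) (𝓝 0) (𝓝 0) := by
    simpa [Pi.div_def] using tendsto_id.div tendsto_Gamma_add_one_nhds_zero one_ne_zero
  refine (h.mono_left nhdsWithin_le_nhds).congr' ?_
  filter_upwards [self_mem_nhdsWithin] with β (hβ : 0 < β)
  rw [Gamma_add_one hβ.ne', div_mul_cancel_left₀ hβ.ne']

lemma riemannLiouvilleKernel_nonneg {β v : ℝ} (hβ : 0 < β) (hv : 0 ≤ v) :
    0 ≤ riemannLiouvilleKernel β v :=
  div_nonneg (rpow_nonneg hv _) (Gamma_pos_of_pos hβ).le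

lemma integral_riemannLiouvilleKernel {β c : ℝ} (hβ : 0 < β) (hc : 0 ≤ c) :
    ∫ v in Ioo 0 c, riemannLiouvilleKernel β v = c ^ β / Gamma (β + 1) := by
  rw [← integral_Ioc_eq_integral_Ioo, ← intervalIntegral.integral_of_le hc]
  simp only [riemannLiouvilleKernel]
  rw [intervalIntegral.integral_div, integral_rpow (Or.inl (by linarith)), Gamma_add_one hβ.ne']
  simp [zero_rpow hβ.ne', div_div]

lemma tendsto_integral_riemannLiouvilleKernel {c : ℝ} (hc : 0 < c) :
    Tendsto (fun β ↦ ∫ v in Ioo 0 c, riemannLiouvilleKernel β v) (𝓝[>] 0) (𝓝 1) := by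
  have hpow : Tendsto (fun β : ℝ ↦ c ^ β) (𝓝 0) (𝓝 1) := by
    simpa using (continuousAt_const_rpow hc.ne' (b := 0)).tendsto
  have h := (hpow.div tendsto_Gamma_add_one_nhds_zero one_ne_zero).mono_left
    (nhdsWithin_le_nhds (s := Ioi 0))
  rw [div_one] at h
  refine h.congr' ?_
  filter_upwards [self_mem_nhdsWithin] with β (hβ : 0 < β)
  rw [integral_riemannLiouvilleKernel hβ hc.le, Pi.div_apply]

lemma tendstoUniformlyOn_riemannLiouvilleKernel {δ : ℝ} (hδ : 0 < δ) :
    TendstoUniformlyOn riemannLiouvilleKernel 0 (𝓝[>] 0) (Ici δ) := by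
  have hδpow : Tendsto (fun β : ℝ ↦ δ ^ (β - 1)) (𝓝[>] 0) (𝓝 (δ ^ (0 - 1 : ℝ))) :=
    ((continuousAt_const_rpow hδ.ne').tendsto.comp (tendsto_id.sub_const 1)).mono_left
      nhdsWithin_le_nhds
  have hδkernel : Tendsto (riemannLiouvilleKernel · δ) (𝓝[>] 0) (𝓝 0) := by
    simpa [riemannLiouvilleKernel, div_eq_mul_inv] using hδpow.mul tendsto_inv_Gamma_nhdsGT_zero
  rw [Metric.tendstoUniformlyOn_iff]
  intro ε hε
  filter_upwards [(tendsto_order.1 hδkernel).2 ε hε, Ioo_mem_nhdsGT one_pos]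
    with β hβε ⟨hβ0, hβ1⟩ v (hv : δ ≤ v)
  rw [Pi.zero_apply, dist_zero_left,
    norm_of_nonneg (riemannLiouvilleKernel_nonneg hβ0 (hδ.le.trans hv))]
  refine lt_of_le_of_lt ?_ hβε
  exact div_le_div_of_nonneg_right (rpow_le_rpow_of_nonpos hδ hv (by linarith))
    (Gamma_pos_of_pos hβ0).le

theorem delta_sifting_limit_general (f : ℝ → ℝ) (hf : ContinuousOn f (Set.Ici 0))
    (b : ℝ) (hb : 0 < b) :
    Tendsto (fun β : ℝ => ∫ v in Set.Ioo (0:ℝ) b, f v * (v ^ (β - 1) / Real.Gamma β))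
      (nhdsWithin 0 (Set.Ioi 0)) (nhds (f 0)) := by
  have hfb : IntegrableOn f (Ioo 0 b) :=
    ((hf.mono Icc_subset_Ici_self).integrableOn_compact isCompact_Icc).mono_set Ioo_subset_Icc_self
  have hf0 : Tendsto f (𝓝[Ioo 0 b] 0) (𝓝 (f 0)) :=
    (hf 0 self_mem_Ici).mono (Ioo_subset_Icc_self.trans Icc_subset_Ici_self)
  have hpeak : ∀ u : Set ℝ, IsOpen u → 0 ∈ u →
      TendstoUniformlyOn riemannLiouvilleKernel 0 (𝓝[>] 0) (Ioo 0 b \ u) := by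
    intro u hu h0u
    obtain ⟨δ, hδ, hball⟩ := Metric.isOpen_iff.1 hu 0 h0u
    refine (tendstoUniformlyOn_riemannLiouvilleKernel hδ).mono fun v ⟨hv, hvu⟩ ↦ ?_
    by_contra! hvδ
    exact hvu (hball (by simpa [abs_of_pos hv.1] using hvδ))
  have hlim := tendsto_setIntegral_peak_smul_of_integrableOn_of_tendsto (μ := volume)
    (φ := riemannLiouvilleKernel) (l := 𝓝[>] 0) measurableSet_Ioo
    measurableSet_Ioo subset_rfl self_mem_nhdsWithin measure_Ioo_lt_top.ne
    (eventually_nhdsWithin_of_forall fun β hβ v hv ↦ riemannLiouvilleKernel_nonneg hβ hv.1.le)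
    hpeak (tendsto_integral_riemannLiouvilleKernel hb)
    (Eventually.of_forall fun β ↦ ((measurable_id.pow_const _).div_const _).aestronglyMeasurable)
    hfb hf0
  simp_rw [smul_eq_mul, mul_comm (riemannLiouvilleKernel _ _)] at hlim
  exact hlim

theorem delta_sifting_limit (f : ℝ → ℝ) (hf : ContinuousOn f (Set.Ici 0))
    (C : ℝ) (hbound : ∀ v : ℝ, 0 ≤ v → |f v| ≤ C) (b : ℝ) (hb : 0 < b) :
    Tendsto (fun β : ℝ => ∫ v in Set.Ioo (0:ℝ) b, f v * (v ^ (β - 1) / Real.Gamma β))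
      (nhdsWithin 0 (Set.Ioi 0)) (nhds (f 0)) :=
  delta_sifting_limit_general f hf b hb
end
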